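/- Let q ∈ (1, ∞) and let δ be an Orlicz function with δ(t) ≥ c·t^q for all t ∈ [0, 1], for some constant c > 0. Define norms N_k^δ on ℝ^k inductively by N_1^δ(x) = |x|, N_2^δ(x,y) = |x|(1 + δ(|y|/|x|)) for x ≠ 0, N_2^δ(0,y) = |y|, and N_k^δ(x_1, …, x_k) = N_2^δ(N_{k-1}^δ(x_1, …, x_{k-1}), x_k) for k ≥ 3. Then there exists a constant a > 0 depending only on c and q such that for every k ≥ 1 and every v ∈ ℝ^k, N_k^δ(v) ≥ a ‖v‖_{ℓ_q^k}. -/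

import Mathlib

/-- `N₂^δ(x,y) = |x|(1 + δ(|y|/|x|))` for `x ≠ 0`, `N₂^δ(0,y) = |y|`. -/
noncomputable def N2 (δ : ℝ → ℝ) (x y : ℝ) : ℝ :=
  if x = 0 then |y| else |x| * (1 + δ (|y| / |x|))

/-- Iterated norms: `Nk δ k v` is `N_{k+1}^δ(v₀,…,v_k)`. -/
noncomputable def Nk (δ : ℝ → ℝ) : (k : ℕ) → (Fin (k + 1) → ℝ) → ℝ
  | 0, v => |v 0|
  | k + 1, v => N2 δ (Nk δ k (fun i => v i.castSucc)) (v (Fin.last (k + 1)))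

/-!
With `b = min 1 (min c (c ^ q))`, the lower bound on `δ` yields `1 + b t^q ≤ (1 + δ t)^q` for all
`t ≥ 0`. Scaling by `S = N_{k-1}(v₁,…,v_{k-1})` turns this into
`N₂(S, y)^q ≥ S^q + b |y|^q`, so by induction `N_k(v)^q ≥ b ‖v‖_q^q`, and `a = b^{1/q}` works.
-/

lemma ConvexOn.mul_le_of_one_le {f : ℝ → ℝ} (hf : ConvexOn ℝ (Set.Ici 0) f) (hf0 : f 0 = 0)
    {t : ℝ} (ht : 1 ≤ t) : t * f 1 ≤ f t := by
  have htpos : 0 < t := one_pos.trans_le ht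
  have hsecant := hf.secant_mono (a := 0) Set.self_mem_Ici
    (Set.mem_Ici.2 zero_le_one) (Set.mem_Ici.2 htpos.le) one_ne_zero htpos.ne' ht
  simp only [hf0, sub_zero, div_one] at hsecant
  rwa [le_div_iff₀ htpos, mul_comm] at hsecant

/-- For `t ≤ 1` this is the lower bound `δ t ≥ c t^q` together with `1 + δ t ≤ (1 + δ t)^q`; for
`t ≥ 1`, convexity gives `δ t ≥ c t` and superadditivity of `x ↦ x^q` gives
`(1 + c t)^q ≥ 1 + c^q t^q`. -/
lemma one_add_mul_rpow_le_one_add_rpow {δ : ℝ → ℝ} {q c b : ℝ} (hq : 1 ≤ q) (hc : 0 ≤ c)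
    (hconv : ConvexOn ℝ (Set.Ici 0) δ) (h0 : δ 0 = 0)
    (hlow : ∀ t ∈ Set.Icc (0 : ℝ) 1, c * t ^ q ≤ δ t) (hbc : b ≤ c) (hbcq : b ≤ c ^ q)
    {t : ℝ} (ht : 0 ≤ t) : 1 + b * t ^ q ≤ (1 + δ t) ^ q := by
  have htq : 0 ≤ t ^ q := Real.rpow_nonneg ht q
  rcases le_total t 1 with ht1 | ht1
  · have hδt : c * t ^ q ≤ δ t := hlow t ⟨ht, ht1⟩
    calc 1 + b * t ^ q ≤ 1 + δ t := by nlinarith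
      _ ≤ (1 + δ t) ^ q :=
        Real.self_le_rpow_of_one_le (by nlinarith [mul_nonneg hc htq]) hq
  · have hδt : c * t ≤ δ t := by
      have h1 : c ≤ δ 1 := by simpa using hlow 1 ⟨zero_le_one, le_rfl⟩
      nlinarith [hconv.mul_le_of_one_le h0 ht1]
    calc 1 + b * t ^ q ≤ 1 ^ q + (c * t) ^ q := by
          rw [Real.one_rpow, Real.mul_rpow hc ht]; nlinarith
      _ ≤ (1 + c * t) ^ q := Real.add_rpow_le_rpow_add zero_le_one (by positivity) hq
      _ ≤ (1 + δ t) ^ q := by gcongr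

section IteratedNorms

variable {δ : ℝ → ℝ} (hδ : ∀ t, 0 ≤ t → 0 ≤ δ t)
include hδ

lemma N2_nonneg (x y : ℝ) : 0 ≤ N2 δ x y := by
  unfold N2
  split_ifs
  · exact abs_nonneg y
  · have := hδ (|y| / |x|) (by positivity)
    positivity

lemma Nk_nonneg : ∀ (k : ℕ) (v : Fin (k + 1) → ℝ), 0 ≤ Nk δ k v
  | 0, v => abs_nonneg (v 0)
  | _ + 1, _ => N2_nonneg hδ _ _

variable {q b : ℝ} (hq : 0 < q) (hb : b ≤ 1)
  (hkey : ∀ t, 0 ≤ t → 1 + b * t ^ q ≤ (1 + δ t) ^ q)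
include hq hb hkey

lemma rpow_add_mul_rpow_le_N2_rpow {S : ℝ} (hS : 0 ≤ S) (y : ℝ) :
    S ^ q + b * |y| ^ q ≤ N2 δ S y ^ q := by
  rcases hS.eq_or_lt with rfl | hSpos
  · rw [N2, if_pos rfl, Real.zero_rpow hq.ne', zero_add]
    exact mul_le_of_le_one_left (by positivity) hb
  · set t := |y| / S
    have ht : 0 ≤ t := by positivity
    have hN2 : N2 δ S y = S * (1 + δ t) := by rw [N2, if_neg hSpos.ne', abs_of_pos hSpos]
    have hyq : |y| ^ q = S ^ q * t ^ q := by
      rw [← Real.mul_rpow hS ht, mul_div_cancel₀ _ hSpos.ne']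
    rw [hN2, Real.mul_rpow hS (by linarith [hδ t ht]), hyq]
    calc S ^ q + b * (S ^ q * t ^ q) = S ^ q * (1 + b * t ^ q) := by ring
      _ ≤ S ^ q * (1 + δ t) ^ q := by gcongr; exact hkey t ht

lemma mul_sum_rpow_le_Nk_rpow :
    ∀ (k : ℕ) (v : Fin (k + 1) → ℝ), b * ∑ i, |v i| ^ q ≤ Nk δ k v ^ q
  | 0, v => by
    simpa [Nk] using mul_le_of_le_one_left (Real.rpow_nonneg (abs_nonneg (v 0)) q) hb
  | k + 1, v => by
    have ih := mul_sum_rpow_le_Nk_rpow k (fun i => v i.castSucc)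
    rw [Fin.sum_univ_castSucc, mul_add]
    calc b * ∑ i : Fin (k + 1), |v i.castSucc| ^ q + b * |v (Fin.last (k + 1))| ^ q
        ≤ Nk δ k (fun i => v i.castSucc) ^ q + b * |v (Fin.last (k + 1))| ^ q := by gcongr
      _ ≤ Nk δ (k + 1) v ^ q :=
        rpow_add_mul_rpow_le_N2_rpow hδ hq hb hkey (Nk_nonneg hδ k _) _

end IteratedNorms

/-- Kalton's lower `ℓ_q` estimate: if `δ` is an Orlicz function with `δ(t) ≥ c·t^q` on
`[0,1]`, then `N_k^δ(v) ≥ a‖v‖_{ℓ_q^k}` for a constant `a > 0` depending only on `c`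
and `q`. -/
theorem stmt_14 (q : ℝ) (hq : 1 < q) (c : ℝ) (hc : 0 < c) :
    ∃ a : ℝ, 0 < a ∧ ∀ δ : ℝ → ℝ,
      ConvexOn ℝ (Set.Ici 0) δ → MonotoneOn δ (Set.Ici 0) →
      ContinuousOn δ (Set.Ici 0) → δ 0 = 0 → (∀ t > (0 : ℝ), 0 < δ t) →
      (∀ t ∈ Set.Icc (0 : ℝ) 1, c * t ^ q ≤ δ t) →
      ∀ k : ℕ, ∀ v : Fin (k + 1) → ℝ,
        a * (∑ i, |v i| ^ q) ^ (1 / q) ≤ Nk δ k v := by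
  have hq0 : 0 < q := one_pos.trans hq
  set b := min 1 (min c (c ^ q))
  have hb : 0 < b := lt_min one_pos (lt_min hc (Real.rpow_pos_of_pos hc q))
  refine ⟨b ^ (1 / q), Real.rpow_pos_of_pos hb _, ?_⟩
  intro δ hconv hmono _ h0 _ hlow k v
  have hδ : ∀ t, 0 ≤ t → 0 ≤ δ t := fun t ht =>
    h0 ▸ hmono Set.self_mem_Ici (Set.mem_Ici.2 ht) ht
  have hkey : ∀ t, 0 ≤ t → 1 + b * t ^ q ≤ (1 + δ t) ^ q := fun t ht =>
    one_add_mul_rpow_le_one_add_rpow hq.le hc.le hconv h0 hlow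
      ((min_le_right _ _).trans (min_le_left _ _)) ((min_le_right _ _).trans (min_le_right _ _)) ht
  have hpow := mul_sum_rpow_le_Nk_rpow hδ hq0 (min_le_left _ _) hkey k v
  rwa [← Real.mul_rpow hb.le (by positivity), one_div,
    Real.rpow_inv_le_iff_of_pos (by positivity) (Nk_nonneg hδ k v) hq0]
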